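/- arXiv:2106.09226 — 2 statements merged into one kernel-verified Lean document; each statement's English description precedes it below -/
import Mathlib

section
/- Assume the emission matrix W has linearly independent columns and regularity holds. Then for every weight vector b ∈ ℝ^{|H|} there exists u ∈ ℝ^{|X|} such that for all x ∈ X^T with P(X_{1:T} = x) > 0: 1(u^T P(X_1 | X_{2:T+1} = x) ≥ 0) = 1(b^T P(H_0 | X_{1:T} = x) ≥ 0), where P(X_1 | X_{2:T+1} = x) is the conditional probability vector of the first token of a length-(T+1) sequence whose tokens at positions 2, …, T+1 equal x. -/
open Matrix


/-- `hmmLik A W x h = P(X_{1:t} = x | H_0 = h)` for an HMM with transition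
matrix `A` and emission probabilities `W`. -/
noncomputable def hmmLik {H X : Type*} [Fintype H] (A : Matrix H H ℝ)
    (W : X → H → ℝ) : List X → H → ℝ
  | [], _ => 1
  | z :: xs, h => ∑ h' : H, A h' h * W z h' * hmmLik A W xs h'

/-!
STATEMENT 2 (Theorem 1 of the paper).

HMM with initial distribution `μ = P(H_0)`, transitions `A`, emissions `W`.
Assume the columns of `W` are linearly independent and regularity holds.
Then for every `b ∈ ℝ^{|H|}` there exists `u ∈ ℝ^{|X|}` such that for every
`x ∈ X^T` with `P(X_{1:T} = x) > 0`,
`𝟙(uᵀ P(X_1 | X_{2:T+1} = x) ≥ 0) = 𝟙(bᵀ P(H_0 | X_{1:T} = x) ≥ 0)`.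

Here, for a length-`(T+1)` sequence whose tokens at positions `2, …, T+1`
equal `x`:  `P(X_1 = z, X_{2:T+1} = x) = ∑_h P(H_1 = h) W z h · P(x | H_1 = h)`
with `P(H_1) = A μ`, and `P(X_{2:T+1} = x) = ∑_h (A μ) h · P(x | H_1 = h)`;
`P(H_0 = g | X_{1:T} = x)` is `μ g · P(x | H_0 = g)` normalized.
-/
lemma hmmLik_nonneg {H X : Type*} [Fintype H] (A : Matrix H H ℝ) (W : X → H → ℝ)
    (hA0 : ∀ h h', 0 ≤ A h' h) (hW0 : ∀ z h, 0 ≤ W z h) :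
    ∀ (xs : List X) (h : H), 0 ≤ hmmLik A W xs h
  | [], _ => zero_le_one
  | z :: xs, h => Finset.sum_nonneg fun h' _ =>
      mul_nonneg (mul_nonneg (hA0 h h') (hW0 z h'))
        (hmmLik_nonneg A W hA0 hW0 xs h')

lemma gramSurj {H X : Type*} [Fintype H] [Fintype X] [DecidableEq H] (M : Matrix X H ℝ)
    (hli : LinearIndependent ℝ (fun h : H => fun z : X => M z h)) :
    Function.Surjective ((Mᵀ * M).mulVec) := by
  have hinj : Function.Injective M.mulVec := by
    rw [Matrix.mulVec_injective_iff]; exact hli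
  have hGinj : Function.Injective ((Mᵀ * M).mulVec) := by
    intro c c' hcc
    set d := c - c' with hdd
    have hd : (Mᵀ * M) *ᵥ d = 0 := by
      rw [hdd, Matrix.mulVec_sub, hcc, sub_self]
    have e2 : d ⬝ᵥ ((Mᵀ * M) *ᵥ d) = (M *ᵥ d) ⬝ᵥ (M *ᵥ d) := by
      rw [← Matrix.mulVec_mulVec, Matrix.dotProduct_mulVec d Mᵀ, Matrix.vecMul_transpose]
    have h1 : (M *ᵥ d) ⬝ᵥ (M *ᵥ d) = 0 := by rw [← e2, hd, dotProduct_zero]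
    have h2 : M *ᵥ d = 0 := by rwa [dotProduct_self_eq_zero] at h1
    have h3 : d = 0 := hinj (h2.trans (Matrix.mulVec_zero M).symm)
    exact sub_eq_zero.mp h3
  exact Matrix.mulVec_surjective_iff_isUnit.mpr
    (Matrix.mulVec_injective_iff_isUnit.mp hGinj)

theorem stmt2 {H X : Type*} [Fintype H] [Fintype X] [DecidableEq H]
    (μ : H → ℝ) (A : Matrix H H ℝ) (W : X → H → ℝ)
    (hμ0 : ∀ h, 0 ≤ μ h) (hμ1 : ∑ h, μ h = 1)
    (hA0 : ∀ h h', 0 ≤ A h' h) (hA1 : ∀ h, ∑ h', A h' h = 1)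
    (hW0 : ∀ z h, 0 ≤ W z h) (hW1 : ∀ h, ∑ z, W z h = 1)
    -- non-degeneracy: the columns of `W` are linearly independent
    (hWli : LinearIndependent ℝ (fun h : H => fun z : X => W z h))
    -- regularity
    (hErg : ∃ n₀ : ℕ, ∀ n ≥ n₀, ∀ h h' : H, 0 < (A ^ n) h' h)
    (hfull : ∀ h, 0 < μ h)
    (T : ℕ) (hT : 1 ≤ T)
    (b : H → ℝ) :
    ∃ u : X → ℝ, ∀ x : Fin T → X,
      0 < ∑ h, μ h * hmmLik A W (List.ofFn x) h →
      (0 ≤ ∑ z, u z *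
          ((∑ h, (A.mulVec μ) h * W z h * hmmLik A W (List.ofFn x) h) /
            (∑ h, (A.mulVec μ) h * hmmLik A W (List.ofFn x) h))
        ↔ 0 ≤ ∑ h, b h *
          (μ h * hmmLik A W (List.ofFn x) h /
            (∑ h', μ h' * hmmLik A W (List.ofFn x) h'))) := by
  -- nonnegativity of matrix powers
  have hpow0 : ∀ (n : ℕ) (h h' : H), 0 ≤ (A ^ n) h' h := by
    intro n
    induction n with
    | zero =>
        intro h h'
        rw [pow_zero, Matrix.one_apply]
        split <;> norm_num
    | succ n ih =>
        intro h h'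
        rw [pow_succ, Matrix.mul_apply]
        exact Finset.sum_nonneg fun k _ => mul_nonneg (ih k h') (hA0 h k)
  -- positivity of A μ
  have hAμ : ∀ h, 0 < (A.mulVec μ) h := by
    intro h'
    obtain ⟨n₀, hn⟩ := hErg
    have hpos : 0 < (A ^ (n₀ + 1)) h' h' := hn (n₀ + 1) (Nat.le_succ _) h' h'
    rw [pow_succ', Matrix.mul_apply] at hpos
    obtain ⟨k, -, hk⟩ : ∃ k ∈ Finset.univ, (0 : ℝ) < A h' k * (A ^ n₀) k h' := by
      by_contra hcon
      push_neg at hcon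
      have : ∑ k, A h' k * (A ^ n₀) k h' ≤ 0 :=
        Finset.sum_nonpos fun k hkk => hcon k hkk
      linarith
    have hApos : 0 < A h' k := by nlinarith [hA0 k h', hpow0 n₀ h' k]
    have : (A.mulVec μ) h' = ∑ k, A h' k * μ k := by
      simp [Matrix.mulVec, dotProduct]
    rw [this]
    exact Finset.sum_pos'
      (fun j _ => mul_nonneg (hA0 j h') (hμ0 j))
      ⟨k, Finset.mem_univ k, mul_pos hApos (hfull k)⟩
  -- choose u
  set M : Matrix X H ℝ := Matrix.of W with hM
  obtain ⟨d, hd⟩ := gramSurj M hWli (fun h => b h * μ h / (A.mulVec μ) h)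
  refine ⟨M *ᵥ d, ?_⟩
  intro x hD1
  set L : H → ℝ := fun h => hmmLik A W (List.ofFn x) h with hL
  have hLnn : ∀ h, 0 ≤ L h := fun h => hmmLik_nonneg A W hA0 hW0 _ h
  set u : X → ℝ := M *ᵥ d with hu
  -- key property of u
  have key : ∀ h, ∑ z, u z * W z h = b h * μ h / (A.mulVec μ) h := by
    intro h
    have h1 : ∑ z, u z * W z h = (u ᵥ* M) h := by
      simp [Matrix.vecMul, dotProduct, hM]
    have h2 : u ᵥ* M = (Mᵀ * M) *ᵥ d := by
      have hsym : (Mᵀ * M)ᵀ = Mᵀ * M := by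
        rw [Matrix.transpose_mul, Matrix.transpose_transpose]
      calc u ᵥ* M = (d ᵥ* Mᵀ) ᵥ* M := by rw [hu, Matrix.vecMul_transpose]
        _ = d ᵥ* (Mᵀ * M) := by rw [Matrix.vecMul_vecMul]
        _ = d ᵥ* (Mᵀ * M)ᵀ := by rw [hsym]
        _ = (Mᵀ * M) *ᵥ d := by rw [Matrix.vecMul_transpose]
    rw [h1, h2, hd]
  -- denominators
  have hD2 : 0 < ∑ h, (A.mulVec μ) h * L h := by
    obtain ⟨h0, -, hh0⟩ : ∃ h0 ∈ Finset.univ, (0 : ℝ) < μ h0 * L h0 := by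
      by_contra hcon
      push_neg at hcon
      have : ∑ h, μ h * L h ≤ 0 := Finset.sum_nonpos fun h hh => hcon h hh
      linarith
    have hLpos : 0 < L h0 := by nlinarith [hfull h0, hLnn h0]
    exact Finset.sum_pos'
      (fun h _ => mul_nonneg (hAμ h).le (hLnn h))
      ⟨h0, Finset.mem_univ h0, mul_pos (hAμ h0) hLpos⟩
  set S : ℝ := ∑ h, b h * (μ h * L h) with hS
  -- LHS equals S / D2
  have lhs_eq : (∑ z, u z *
      ((∑ h, (A.mulVec μ) h * W z h * L h) / (∑ h, (A.mulVec μ) h * L h)))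
      = S / (∑ h, (A.mulVec μ) h * L h) := by
    have e1 : ∑ z, u z * ((∑ h, (A.mulVec μ) h * W z h * L h)
        / (∑ h, (A.mulVec μ) h * L h))
        = (∑ z, u z * ∑ h, (A.mulVec μ) h * W z h * L h)
          / (∑ h, (A.mulVec μ) h * L h) := by
      rw [Finset.sum_div]
      exact Finset.sum_congr rfl fun z _ => (mul_div_assoc _ _ _).symm
    rw [e1]
    congr 1
    calc ∑ z, u z * ∑ h, (A.mulVec μ) h * W z h * L h
        = ∑ z, ∑ h, (A.mulVec μ) h * L h * (u z * W z h) := by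
          refine Finset.sum_congr rfl fun z _ => ?_
          rw [Finset.mul_sum]
          exact Finset.sum_congr rfl fun h _ => by ring
      _ = ∑ h, ∑ z, (A.mulVec μ) h * L h * (u z * W z h) := Finset.sum_comm
      _ = ∑ h, (A.mulVec μ) h * L h * ∑ z, u z * W z h := by
          exact Finset.sum_congr rfl fun h _ => (Finset.mul_sum _ _ _).symm
      _ = ∑ h, (A.mulVec μ) h * L h * (b h * μ h / (A.mulVec μ) h) := by
          exact Finset.sum_congr rfl fun h _ => by rw [key h]
      _ = S := by
          refine Finset.sum_congr rfl fun h _ => ?_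
          have hne : (A.mulVec μ) h ≠ 0 := (hAμ h).ne'
          field_simp
  -- RHS equals S / D1
  have rhs_eq : (∑ h, b h * (μ h * L h / (∑ h', μ h' * L h')))
      = S / (∑ h', μ h' * L h') := by
    rw [Finset.sum_div]
    exact Finset.sum_congr rfl fun h _ => (mul_div_assoc _ _ _).symm
  rw [lhs_eq, rhs_eq, le_div_iff₀ hD2, le_div_iff₀ hD1, zero_mul, zero_mul]
end

section
/- Assume the non-degeneracy condition with recoverable hidden states H* = {j*} × S*, and regularity. For x ∈ X^T define Î(x) = {i ∈ [T] : supp(P(J_i | X_{−i} = x_{−i})) = {j*} and supp(P(S_i | X_{−i} = x_{−i})) ⊆ S*}. Then there exist a query q ∈ ℝ^{|H|} and a key matrix Θ^{(K)} ∈ ℝ^{|H|×|X|} such that whenever P(X_{1:T} = x) > 0 and Î(x) is nonempty, the set of attended-to positions argmax_{i ∈ [T]} { q^T Θ^{(K)} G_i(x) } equals Î(x), where G_i(x) = P(X_i | X_{−i} = x_{−i}) and argmax denotes the set of positions achieving the maximum. -/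
open scoped Classical
open Matrix

noncomputable section

/-- Forward pass for a Markov chain with transition matrix `A`. -/
def fwdVec {H : Type*} [Fintype H] (A : Matrix H H ℝ) :
    (H → ℝ) → List (H → ℝ) → (H → ℝ)
  | μ, [] => μ
  | μ, v :: vs => fwdVec A (A.mulVec fun h => μ h * v h) vs

/-- `mJointAt A μ W m x i g = P(H_i = g, X_{−i} = x_{−i} | M = m)` in a
memory-augmented HMM (hidden chain `H_1, …, H_T`, `P(H_1) = A μ`). -/
def mJointAt {𝕄 S X : Type*} {N T : ℕ} [Fintype S] [DecidableEq S]
    (A : Matrix (Fin N × S) (Fin N × S) ℝ) (μ : Fin N × S → ℝ)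
    (W : X → 𝕄 → Fin N × S → ℝ) (m : Fin N → 𝕄)
    (x : Fin T → X) (i : Fin T) (g : Fin N × S) : ℝ :=
  ∑ h, fwdVec A (A.mulVec μ)
    (List.ofFn fun k : Fin T =>
      if k = i then (fun g' => if g' = g then 1 else 0)
      else fun g' => W (x k) (m g'.1) g') h

/-- `mZ … x i = P(X_{−i} = x_{−i})`. -/
def mZ {𝕄 S X : Type*} {N T : ℕ} [Fintype 𝕄] [Fintype S] [DecidableEq S]
    (pM : (Fin N → 𝕄) → ℝ) (A : Matrix (Fin N × S) (Fin N × S) ℝ)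
    (μ : Fin N × S → ℝ) (W : X → 𝕄 → Fin N × S → ℝ)
    (x : Fin T → X) (i : Fin T) : ℝ :=
  ∑ m, pM m * ∑ g, mJointAt A μ W m x i g

/-- `mSeqPm … m x = P(X_{1:T} = x | M = m)`. -/
def mSeqPm {𝕄 S X : Type*} {N T : ℕ} [Fintype S]
    (A : Matrix (Fin N × S) (Fin N × S) ℝ) (μ : Fin N × S → ℝ)
    (W : X → 𝕄 → Fin N × S → ℝ) (m : Fin N → 𝕄) (x : Fin T → X) : ℝ :=
  ∑ h, fwdVec A (A.mulVec μ)
    (List.ofFn fun k : Fin T => fun g' => W (x k) (m g'.1) g') h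

/-- `mSeqP … x = P(X_{1:T} = x)`. -/
def mSeqP {𝕄 S X : Type*} {N T : ℕ} [Fintype 𝕄] [Fintype S]
    (pM : (Fin N → 𝕄) → ℝ) (A : Matrix (Fin N × S) (Fin N × S) ℝ)
    (μ : Fin N × S → ℝ) (W : X → 𝕄 → Fin N × S → ℝ) (x : Fin T → X) : ℝ :=
  ∑ m, pM m * mSeqPm A μ W m x

/-- `mGtok … x i z = P(X_i = z | X_{−i} = x_{−i})`, the pretrained model
output `G_i(x)` at position `i`. -/
def mGtok {𝕄 S X : Type*} {N T : ℕ} [Fintype 𝕄] [Fintype S] [DecidableEq S]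
    (pM : (Fin N → 𝕄) → ℝ) (A : Matrix (Fin N × S) (Fin N × S) ℝ)
    (μ : Fin N × S → ℝ) (W : X → 𝕄 → Fin N × S → ℝ)
    (x : Fin T → X) (i : Fin T) (z : X) : ℝ :=
  (∑ m, pM m * ∑ g, mJointAt A μ W m x i g * W z (m g.1) g) / mZ pM A μ W x i

/-- `mPostH … x i g = P(H_i = g | X_{−i} = x_{−i})`. -/
def mPostH {𝕄 S X : Type*} {N T : ℕ} [Fintype 𝕄] [Fintype S] [DecidableEq S]
    (pM : (Fin N → 𝕄) → ℝ) (A : Matrix (Fin N × S) (Fin N × S) ℝ)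
    (μ : Fin N × S → ℝ) (W : X → 𝕄 → Fin N × S → ℝ)
    (x : Fin T → X) (i : Fin T) (g : Fin N × S) : ℝ :=
  (∑ m, pM m * mJointAt A μ W m x i g) / mZ pM A μ W x i

/-!
Non-degeneracy yields one linear functional `c` on `ℝ^X` that is `1` on every emission column
`W_{:,(m,h)}` with `h ∈ H*` and `0` on all other columns: it exists on the quotient of `ℝ^X` by
the span of the non-recoverable columns, where the recoverable columns stay independent.
Since `G_i(x)` is the posterior mixture `∑ P(M = m, H_i = h | X_{−i}) W_{:,(m_j, h)}`, the score
`c ⬝ G_i(x)` is the posterior mass of `H*` at position `i`. That mass is at most `1`, and equals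
`1` exactly when `i ∈ Î(x)`; as `Î(x)` is nonempty, its maximisers are `Î(x)`.
-/

open Finset

theorem setOf_forall_le_eq_of_le_of_exists_eq {ι α : Type*} [PartialOrder α] {f : ι → α} {b : α}
    (hle : ∀ i, f i ≤ b) (hb : ∃ i, f i = b) :
    {i | ∀ i', f i' ≤ f i} = {i | f i = b} := by
  obtain ⟨i₀, hi₀⟩ := hb
  ext i
  exact ⟨fun hi => (hle i).antisymm (hi₀ ▸ hi i₀), fun hi i' => hi ▸ hle i'⟩

theorem exists_dual_eq_of_disjoint_span {K V ι : Type*} [Field K] [AddCommGroup V] [Module K V]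
    {b : ι → V} (hb : LinearIndependent K b)
    {U : Submodule K V} (hU : Disjoint (Submodule.span K (Set.range b)) U) (t : ι → K) :
    ∃ φ : Module.Dual K V, (∀ i, φ (b i) = t i) ∧ ∀ u ∈ U, φ u = 0 := by
  have hq : LinearIndependent K (U.mkQ ∘ b) := hb.map (by rwa [U.ker_mkQ])
  obtain ⟨ψ, hψ⟩ := LinearMap.exists_extend ((Module.Basis.span hq).constr K t)
  refine ⟨ψ ∘ₗ U.mkQ, fun i => ?_, fun u hu => ?_⟩
  · have := LinearMap.congr_fun hψ (Module.Basis.span hq i)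
    rw [LinearMap.comp_apply, Module.Basis.constr_basis, Module.Basis.span_apply] at this
    simpa using this
  · simp [(Submodule.Quotient.mk_eq_zero U).mpr hu]

section SubProbability

variable {ι : Type*} [Fintype ι] {w : ι → ℝ}

theorem sum_le_one_of_sum_eq_zero_or_one (hw : ∀ g, 0 ≤ w g)
    (h01 : ∑ g, w g = 0 ∨ ∑ g, w g = 1) (s : Finset ι) : ∑ g ∈ s, w g ≤ 1 :=
  (sum_le_univ_sum_of_nonneg hw).trans (by rcases h01 with h | h <;> norm_num [h])

theorem sum_eq_one_iff_of_sum_eq_zero_or_one (hw : ∀ g, 0 ≤ w g)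
    (h01 : ∑ g, w g = 0 ∨ ∑ g, w g = 1) (s : Finset ι) :
    ∑ g ∈ s, w g = 1 ↔ ∑ g, w g ≠ 0 ∧ ∀ g ∉ s, w g = 0 := by
  constructor
  · intro hs
    have htot : ∑ g, w g = 1 :=
      h01.resolve_left fun h0 => by linarith [sum_le_univ_sum_of_nonneg hw (s := s)]
    have hcompl : ∑ g ∈ sᶜ, w g = 0 := by linarith [sum_compl_add_sum s w]
    refine ⟨htot ▸ one_ne_zero, fun g hg => ?_⟩
    exact (sum_eq_zero_iff_of_nonneg fun g _ => hw g).1 hcompl g (mem_compl.2 hg)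
  · rintro ⟨hne, hoff⟩
    rw [sum_subset (subset_univ s) fun g _ hg => hoff g hg]
    exact h01.resolve_left hne

end SubProbability

theorem marginals_vanish_off_iff {α β : Type*} [Fintype α] [Fintype β] {w : α × β → ℝ}
    (hw : ∀ g, 0 ≤ w g) (a : α) (t : Finset β) :
    ((∀ j, j ≠ a → ∑ s, w (j, s) = 0) ∧ ∑ s, w (a, s) ≠ 0) ∧ (∀ s, s ∉ t → ∑ j, w (j, s) = 0)
      ↔ ∑ g, w g ≠ 0 ∧ ∀ g ∉ {a} ×ˢ t, w g = 0 := by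
  have hrow : ∀ j, ∑ s, w (j, s) = 0 ↔ ∀ s, w (j, s) = 0 := fun j => by
    simp [sum_eq_zero_iff_of_nonneg fun s _ => hw (j, s)]
  have hcol : ∀ s, ∑ j, w (j, s) = 0 ↔ ∀ j, w (j, s) = 0 := fun s => by
    simp [sum_eq_zero_iff_of_nonneg fun j _ => hw (j, s)]
  have htot : ∑ g, w g = 0 ↔ ∀ g, w g = 0 := by
    simp [sum_eq_zero_iff_of_nonneg fun g _ => hw g]
  simp only [mem_product, mem_singleton, not_and_or, Prod.forall]
  constructor
  · rintro ⟨⟨hj, ha⟩, hs⟩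
    refine ⟨fun h0 => ha ((hrow a).2 fun s => htot.1 h0 _), fun j s hg => ?_⟩
    rcases hg with hj' | hs'
    · exact (hrow j).1 (hj j hj') s
    · exact (hcol s).1 (hs s hs') j
  · rintro ⟨hne, hoff⟩
    refine ⟨⟨fun j hj => (hrow j).2 fun s => hoff j s (.inl hj), fun ha => hne ?_⟩,
      fun s hs => (hcol s).2 fun j => hoff j s (.inr hs)⟩
    refine htot.2 fun ⟨j, s⟩ => ?_
    by_cases hj : j = a
    · subst hj
      exact (hrow j).1 ha s
    · exact hoff j s (.inl hj)

theorem exists_dotProduct_eq_one_on_recoverable {𝕄 S X : Type*} {N : ℕ} [Fintype X]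
    (W : X → 𝕄 → Fin N × S → ℝ) (jstar : Fin N) (Sstar : Finset S)
    (hli : LinearIndependent ℝ
      (fun p : 𝕄 × {s : S // s ∈ Sstar} => fun z : X => W z p.1 (jstar, p.2.1)))
    (hspan : Submodule.span ℝ
        {f : X → ℝ | ∃ m0 : 𝕄, ∃ s : S, s ∈ Sstar ∧ f = fun z => W z m0 (jstar, s)}
      ⊓ Submodule.span ℝ
        {f : X → ℝ | ∃ m0 : 𝕄, ∃ g : Fin N × S,
          ¬(g.1 = jstar ∧ g.2 ∈ Sstar) ∧ f = fun z => W z m0 g}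
      = ⊥) :
    ∃ c : X → ℝ, ∀ m0 g, (g ∈ ({jstar} ×ˢ Sstar : Finset (Fin N × S)) →
      c ⬝ᵥ (fun z => W z m0 g) = 1) ∧ (g ∉ ({jstar} ×ˢ Sstar : Finset (Fin N × S)) →
      c ⬝ᵥ (fun z => W z m0 g) = 0) := by
  have hrange : Set.range (fun p : 𝕄 × {s : S // s ∈ Sstar} => fun z : X => W z p.1 (jstar, p.2.1))
      = {f : X → ℝ | ∃ m0 : 𝕄, ∃ s : S, s ∈ Sstar ∧ f = fun z => W z m0 (jstar, s)} := by
    ext f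
    constructor
    · rintro ⟨⟨m0, s, hs⟩, rfl⟩
      exact ⟨m0, s, hs, rfl⟩
    · rintro ⟨m0, s, hs, rfl⟩
      exact ⟨(m0, ⟨s, hs⟩), rfl⟩
  obtain ⟨φ, hφ1, hφ0⟩ := exists_dual_eq_of_disjoint_span hli
    (by rw [disjoint_iff, hrange, hspan]) 1
  set c := (dotProductEquiv ℝ X).symm φ
  have hc : ∀ f, c ⬝ᵥ f = φ f := LinearMap.congr_fun ((dotProductEquiv ℝ X).apply_symm_apply φ)
  refine ⟨c, fun m0 g => ⟨fun hg => ?_, fun hg => ?_⟩⟩ <;>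
    simp only [mem_product, mem_singleton] at hg <;> rw [hc]
  · obtain ⟨j, s⟩ := g
    obtain ⟨rfl, hs⟩ := hg
    exact hφ1 (m0, ⟨s, hs⟩)
  · exact hφ0 _ (Submodule.subset_span ⟨m0, g, hg, rfl⟩)

theorem fwdVec_nonneg {H : Type*} [Fintype H] {A : Matrix H H ℝ} (hA : ∀ g g', 0 ≤ A g g')
    {μ : H → ℝ} (hμ : 0 ≤ μ) {l : List (H → ℝ)} (hl : ∀ v ∈ l, 0 ≤ v) :
    0 ≤ fwdVec A μ l := by
  induction l generalizing μ with
  | nil => exact hμ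
  | cons v vs ih =>
    refine ih (fun h => sum_nonneg fun g _ => ?_) fun w hw => hl w (List.mem_cons_of_mem _ hw)
    exact mul_nonneg (hA h g) (mul_nonneg (hμ g) (hl v List.mem_cons_self g))

section MemoryHMM

variable {𝕄 S X : Type*} {N T : ℕ} [Fintype S] [DecidableEq S]
  {pM : (Fin N → 𝕄) → ℝ} {A : Matrix (Fin N × S) (Fin N × S) ℝ} {μ : Fin N × S → ℝ}
  {W : X → 𝕄 → Fin N × S → ℝ}

theorem mJointAt_nonneg (hA : ∀ g g', 0 ≤ A g g') (hμ : ∀ g, 0 ≤ μ g)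
    (hW : ∀ z m0 g, 0 ≤ W z m0 g) (m : Fin N → 𝕄) (x : Fin T → X) (i : Fin T)
    (g : Fin N × S) : 0 ≤ mJointAt A μ W m x i g := by
  refine sum_nonneg fun h _ => fwdVec_nonneg hA (fun h' => ?_) (fun v hv => ?_) h
  · exact sum_nonneg fun g' _ => mul_nonneg (hA h' g') (hμ g')
  · obtain ⟨k, rfl⟩ := List.mem_ofFn.mp hv
    intro g'
    split_ifs
    · positivity
    · exact hW _ _ _

variable [Fintype 𝕄]

theorem mZ_eq_sum (x : Fin T → X) (i : Fin T) :
    mZ pM A μ W x i = ∑ g, ∑ m, pM m * mJointAt A μ W m x i g := by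
  simp only [mZ, mul_sum]
  exact sum_comm

theorem mPostH_nonneg (hpM : ∀ m, 0 ≤ pM m) (hA : ∀ g g', 0 ≤ A g g') (hμ : ∀ g, 0 ≤ μ g)
    (hW : ∀ z m0 g, 0 ≤ W z m0 g) (x : Fin T → X) (i : Fin T) (g : Fin N × S) :
    0 ≤ mPostH pM A μ W x i g := by
  have hJ := mJointAt_nonneg hA hμ hW (x := x) (i := i)
  exact div_nonneg (sum_nonneg fun m _ => mul_nonneg (hpM m) (hJ m g))
    (sum_nonneg fun m _ => mul_nonneg (hpM m) (sum_nonneg fun g _ => hJ m g))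

-- Off the support of `X_{−i}` the normaliser `mZ` vanishes and, as `a / 0 = 0`, so does the
-- whole posterior.
theorem sum_mPostH_eq_zero_or_one (x : Fin T → X) (i : Fin T) :
    ∑ g, mPostH pM A μ W x i g = 0 ∨ ∑ g, mPostH pM A μ W x i g = 1 := by
  simp only [mPostH, ← sum_div, ← mZ_eq_sum]
  rcases eq_or_ne (mZ pM A μ W x i) 0 with h | h <;> simp [h]

theorem dotProduct_mGtok [Fintype X] {c : X → ℝ} {s : Finset (Fin N × S)}
    (hc : ∀ m0 g, (g ∈ s → c ⬝ᵥ (fun z => W z m0 g) = 1) ∧ (g ∉ s → c ⬝ᵥ (fun z => W z m0 g) = 0))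
    (x : Fin T → X) (i : Fin T) :
    c ⬝ᵥ mGtok pM A μ W x i = ∑ g ∈ s, mPostH pM A μ W x i g := by
  have hJ : ∀ m, ∑ g, mJointAt A μ W m x i g * (c ⬝ᵥ fun z => W z (m g.1) g)
      = ∑ g ∈ s, mJointAt A μ W m x i g := by
    intro m
    rw [← sum_subset (subset_univ s) fun g _ hg => by rw [(hc _ g).2 hg, mul_zero]]
    exact sum_congr rfl fun g hg => by rw [(hc _ g).1 hg, mul_one]
  calc c ⬝ᵥ mGtok pM A μ W x i
      = (∑ m, pM m * ∑ g, mJointAt A μ W m x i g * (c ⬝ᵥ fun z => W z (m g.1) g))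
          / mZ pM A μ W x i := by
        simp only [mGtok, dotProduct, mul_div_assoc', ← sum_div, mul_sum]
        congr 1
        rw [sum_comm]
        refine sum_congr rfl fun m _ => ?_
        rw [sum_comm]
        exact sum_congr rfl fun g _ => sum_congr rfl fun z _ => by ring
    _ = ∑ g ∈ s, mPostH pM A μ W x i g := by
        simp only [hJ, mPostH, ← sum_div, mul_sum]
        rw [sum_comm]

end MemoryHMM

theorem stmt8_general {𝕄 S X : Type*} {N : ℕ}
    [Fintype 𝕄] [Fintype S] [Fintype X] [DecidableEq S]
    (pM : (Fin N → 𝕄) → ℝ) (μ : Fin N × S → ℝ)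
    (A : Matrix (Fin N × S) (Fin N × S) ℝ) (W : X → 𝕄 → Fin N × S → ℝ)
    (hpM0 : ∀ m, 0 ≤ pM m)
    (hμ0 : ∀ g, 0 ≤ μ g)
    (hA0 : ∀ g g', 0 ≤ A g' g)
    (hW0 : ∀ z m0 g, 0 ≤ W z m0 g)
    -- non-degeneracy with recoverable hidden states `H* = {j*} × S*`
    (jstar : Fin N) (Sstar : Finset S)
    (hli : LinearIndependent ℝ
      (fun p : 𝕄 × {s : S // s ∈ Sstar} => fun z : X => W z p.1 (jstar, p.2.1)))
    (hspan : Submodule.span ℝ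
        {f : X → ℝ | ∃ m0 : 𝕄, ∃ s : S, s ∈ Sstar ∧ f = fun z => W z m0 (jstar, s)}
      ⊓ Submodule.span ℝ
        {f : X → ℝ | ∃ m0 : 𝕄, ∃ g : Fin N × S,
          ¬(g.1 = jstar ∧ g.2 ∈ Sstar) ∧ f = fun z => W z m0 g}
      = ⊥)
    (T : ℕ) :
    ∃ (q : Fin N × S → ℝ) (ΘK : Matrix (Fin N × S) X ℝ),
      ∀ x : Fin T → X,
        0 < mSeqP pM A μ W x →
        -- `Î(x)` is nonempty
        (∃ i : Fin T,
          ((∀ j : Fin N, j ≠ jstar → ∑ s, mPostH pM A μ W x i (j, s) = 0)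
            ∧ (∑ s, mPostH pM A μ W x i (jstar, s)) ≠ 0)
          ∧ (∀ s : S, s ∉ Sstar → ∑ j, mPostH pM A μ W x i (j, s) = 0)) →
        -- attended-to positions = `Î(x)`
        {i : Fin T | ∀ i' : Fin T,
            q ⬝ᵥ ΘK.mulVec (mGtok pM A μ W x i')
              ≤ q ⬝ᵥ ΘK.mulVec (mGtok pM A μ W x i)}
          = {i : Fin T |
              ((∀ j : Fin N, j ≠ jstar → ∑ s, mPostH pM A μ W x i (j, s) = 0)
                ∧ (∑ s, mPostH pM A μ W x i (jstar, s)) ≠ 0)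
              ∧ (∀ s : S, s ∉ Sstar → ∑ j, mPostH pM A μ W x i (j, s) = 0)} := by
  obtain ⟨c, hc⟩ := exists_dotProduct_eq_one_on_recoverable W jstar Sstar hli hspan
  rcases isEmpty_or_nonempty (Fin N × S) with hH | ⟨⟨g₀⟩⟩
  · refine ⟨0, 0, fun x _ ⟨i, ⟨_, hi⟩, _⟩ => ?_⟩
    obtain ⟨s, -, -⟩ := exists_ne_zero_of_sum_ne_zero hi
    exact isEmptyElim (jstar, s)
  refine ⟨Pi.single g₀ 1, replicateRow _ c, fun x _ hne => ?_⟩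
  have hpost := mPostH_nonneg hpM0 (fun g g' => hA0 g' g) hμ0 hW0 x
  have hscore : ∀ i, Pi.single g₀ 1 ⬝ᵥ replicateRow _ c *ᵥ mGtok pM A μ W x i
      = ∑ g ∈ {jstar} ×ˢ Sstar, mPostH pM A μ W x i g := fun i => by
    rw [replicateRow_mulVec_eq_const, single_one_dotProduct]
    exact dotProduct_mGtok hc x i
  simp only [hscore, fun i => marginals_vanish_off_iff (hpost i) jstar Sstar,
    fun i => (sum_eq_one_iff_of_sum_eq_zero_or_one (hpost i) (sum_mPostH_eq_zero_or_one x i)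
      ({jstar} ×ˢ Sstar)).symm] at hne ⊢
  exact setOf_forall_le_eq_of_le_of_exists_eq
    (fun i => sum_le_one_of_sum_eq_zero_or_one (hpost i) (sum_mPostH_eq_zero_or_one x i) _) hne

theorem stmt8 {𝕄 S X : Type*} {N : ℕ}
    [Fintype 𝕄] [Fintype S] [Fintype X] [DecidableEq 𝕄] [DecidableEq S]
    (pM : (Fin N → 𝕄) → ℝ) (μ : Fin N × S → ℝ)
    (A : Matrix (Fin N × S) (Fin N × S) ℝ) (W : X → 𝕄 → Fin N × S → ℝ)
    (hpM0 : ∀ m, 0 ≤ pM m) (hpM1 : ∑ m, pM m = 1)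
    (hμ0 : ∀ g, 0 ≤ μ g) (hμ1 : ∑ g, μ g = 1)
    (hA0 : ∀ g g', 0 ≤ A g' g) (hA1 : ∀ g, ∑ g', A g' g = 1)
    (hW0 : ∀ z m0 g, 0 ≤ W z m0 g) (hW1 : ∀ m0 g, ∑ z, W z m0 g = 1)
    -- non-degeneracy with recoverable hidden states `H* = {j*} × S*`
    (jstar : Fin N) (Sstar : Finset S)
    (hli : LinearIndependent ℝ
      (fun p : 𝕄 × {s : S // s ∈ Sstar} => fun z : X => W z p.1 (jstar, p.2.1)))
    (hspan : Submodule.span ℝ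
        {f : X → ℝ | ∃ m0 : 𝕄, ∃ s : S, s ∈ Sstar ∧ f = fun z => W z m0 (jstar, s)}
      ⊓ Submodule.span ℝ
        {f : X → ℝ | ∃ m0 : 𝕄, ∃ g : Fin N × S,
          ¬(g.1 = jstar ∧ g.2 ∈ Sstar) ∧ f = fun z => W z m0 g}
      = ⊥)
    -- regularity
    (hErg : ∃ n₀ : ℕ, ∀ n ≥ n₀, ∀ g g' : Fin N × S, 0 < (A ^ n) g' g)
    (hfull : ∀ g, 0 < μ g)
    (T : ℕ) :
    ∃ (q : Fin N × S → ℝ) (ΘK : Matrix (Fin N × S) X ℝ),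
      ∀ x : Fin T → X,
        0 < mSeqP pM A μ W x →
        -- `Î(x)` is nonempty
        (∃ i : Fin T,
          ((∀ j : Fin N, j ≠ jstar → ∑ s, mPostH pM A μ W x i (j, s) = 0)
            ∧ (∑ s, mPostH pM A μ W x i (jstar, s)) ≠ 0)
          ∧ (∀ s : S, s ∉ Sstar → ∑ j, mPostH pM A μ W x i (j, s) = 0)) →
        -- attended-to positions = `Î(x)`
        {i : Fin T | ∀ i' : Fin T,
            q ⬝ᵥ ΘK.mulVec (mGtok pM A μ W x i')
              ≤ q ⬝ᵥ ΘK.mulVec (mGtok pM A μ W x i)}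
          = {i : Fin T |
              ((∀ j : Fin N, j ≠ jstar → ∑ s, mPostH pM A μ W x i (j, s) = 0)
                ∧ (∑ s, mPostH pM A μ W x i (jstar, s)) ≠ 0)
              ∧ (∀ s : S, s ∉ Sstar → ∑ j, mPostH pM A μ W x i (j, s) = 0)} :=
  stmt8_general pM μ A W hpM0 hμ0 hA0 hW0 jstar Sstar hli hspan T

end
end
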